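/- The 2-cocycle α₁ on Φ' with α₁(e₂,e₄)=e₂, α₁(e₃,e₄)=-e₃ satisfies [α₁,α₁] = 0, where [·,·] is the Nijenhuis–Richardson bracket on 2-cochains; i.e., for all x,y,z, α₁(α₁(x,y),z) - α₁(α₁(x,z),y) + α₁(α₁(y,z),x) = 0. -/
import Mathlib


noncomputable section

/-- The 2-cocycle `α₁` on Φ′ with `α₁(e₂,e₄)=e₂`, `α₁(e₃,e₄)=-e₃` (basis
`e₁,…,e₄` indexed `0,…,3`), extended antisymmetrically and bilinearly. -/
def alpha1 {K : Type*} [Field K] (x y : Fin 4 → K) : Fin 4 → K :=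
  ![ 0,
     x 1 * y 3 - x 3 * y 1,
     -(x 2 * y 3 - x 3 * y 2),
     0 ]

/-- `α₁` satisfies `[α₁, α₁] = 0` for the Nijenhuis–Richardson bracket on
2-cochains: `α₁(α₁(x,y),z) - α₁(α₁(x,z),y) + α₁(α₁(y,z),x) = 0`. -/
theorem alpha1_NR_square_zero {K : Type*} [Field K] (h2 : (2 : K) ≠ 0) :
    ∀ x y z : Fin 4 → K,
      alpha1 (alpha1 x y) z - alpha1 (alpha1 x z) y + alpha1 (alpha1 y z) x = 0 := by
  intro x y z
  funext i
  fin_cases i <;> simp [alpha1] <;> ring
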